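/- (Estimate I₂ from the proof of Lemma 3.1(a).) Let n ≥ 1 be an integer, let 0 < m < n/2 and σ > 0 be real numbers. Then there exists a constant C > 0 such that for every x ∈ ℝⁿ with x ≠ 0: ∫_{{y : |y−x| ≥ |x|/2 and |y| ≤ |x|}} |y|^{2m−n} |x−y|^{−(n+2σ)} dy ≤ C |x|^{2m−2σ−n}. -/

import Mathlib

open MeasureTheory Real Metric Set

/-!
On the region, `‖x - y‖ ≥ ‖x‖ / 2`, so the second factor is at most `(‖x‖ / 2) ^ (-(n + 2σ))`,
and the region lies in the ball of radius `‖x‖`. In polar coordinates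
`∫_{‖y‖ ≤ R} ‖y‖ ^ p dy = n |B₁| R ^ (p + n) / (p + n)` for `p > -n`, which for `p = 2m - n`
gives the power `‖x‖ ^ (2m - 2σ - n)`.
-/

lemma indicator_closedBall_norm_rpow {E : Type*} [SeminormedAddCommGroup E] (R p : ℝ) :
    (closedBall (0 : E) R).indicator (fun y ↦ ‖y‖ ^ p) =
      fun y ↦ (Iic R).indicator (· ^ p) ‖y‖ := by
  ext y
  simp [indicator, mem_closedBall]

lemma eqOn_pow_mul_indicator_Iic_rpow {k : ℕ} (hk : 1 ≤ k) (R p : ℝ) :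
    EqOn (fun t : ℝ ↦ t ^ (k - 1) • (Iic R).indicator (· ^ p) t)
      ((Iic R).indicator (· ^ (p + k - 1))) (Ioi 0) := by
  intro t (ht : 0 < t)
  by_cases htR : t ≤ R
  · simp only [indicator_of_mem (show t ∈ Iic R from htR), smul_eq_mul]
    rw [← rpow_natCast, Nat.cast_sub hk, ← rpow_add ht]
    ring_nf
  · simp [htR]

section RadialPower

variable {E : Type*} [NormedAddCommGroup E] [NormedSpace ℝ E] [FiniteDimensional ℝ E]
  [MeasurableSpace E] [BorelSpace E] [Nontrivial E] (μ : Measure E) [μ.IsAddHaarMeasure]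
  {p : ℝ}

lemma integrableOn_closedBall_norm_rpow (hp : -(Module.finrank ℝ E : ℝ) < p) (R : ℝ) :
    IntegrableOn (fun y ↦ ‖y‖ ^ p) (closedBall (0 : E) R) μ := by
  rw [← integrable_indicator_iff measurableSet_closedBall, indicator_closedBall_norm_rpow,
    integrable_fun_norm_addHaar, integrableOn_congr_fun
      (eqOn_pow_mul_indicator_Iic_rpow Module.finrank_pos R p) measurableSet_Ioi,
    integrableOn_indicator_iff measurableSet_Iic, inter_comm, Ioi_inter_Iic]
  exact (intervalIntegral.intervalIntegrable_rpow' (by linarith)).1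

lemma integral_closedBall_norm_rpow (hp : -(Module.finrank ℝ E : ℝ) < p) {R : ℝ} (hR : 0 ≤ R) :
    ∫ y in closedBall (0 : E) R, ‖y‖ ^ p ∂μ =
      Module.finrank ℝ E * μ.real (ball 0 1) / (p + Module.finrank ℝ E) *
        R ^ (p + Module.finrank ℝ E) := by
  rw [← integral_indicator measurableSet_closedBall, indicator_closedBall_norm_rpow,
    integral_fun_norm_addHaar, setIntegral_congr_fun measurableSet_Ioi
      (eqOn_pow_mul_indicator_Iic_rpow Module.finrank_pos R p),
    setIntegral_indicator measurableSet_Iic]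
  have hpd : 0 < p + Module.finrank ℝ E := by linarith
  rw [Ioi_inter_Iic, ← intervalIntegral.integral_of_le hR, integral_rpow (Or.inl (by linarith)),
    sub_add_cancel, zero_rpow hpd.ne', nsmul_eq_mul, smul_eq_mul]
  field_simp
  ring

lemma setIntegral_norm_rpow_mul_norm_sub_rpow_le {x : E} (hx : x ≠ 0)
    (hp : -(Module.finrank ℝ E : ℝ) < p) {q : ℝ} (hq : q ≤ 0) :
    ∫ y in {y | ‖x‖ / 2 ≤ ‖y - x‖ ∧ ‖y‖ ≤ ‖x‖}, ‖y‖ ^ p * ‖x - y‖ ^ q ∂μ ≤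
      2 ^ (-q) * (Module.finrank ℝ E * μ.real (ball 0 1) / (p + Module.finrank ℝ E)) *
        ‖x‖ ^ (p + q + Module.finrank ℝ E) := by
  set S := {y | ‖x‖ / 2 ≤ ‖y - x‖ ∧ ‖y‖ ≤ ‖x‖}
  have hxpos : 0 < ‖x‖ := norm_pos_iff.2 hx
  have hS : MeasurableSet S := by measurability
  have hSball : S ⊆ closedBall 0 ‖x‖ := fun y hy ↦ mem_closedBall_zero_iff.2 hy.2
  have hball := integrableOn_closedBall_norm_rpow μ hp ‖x‖
  have hbound : ∀ y ∈ S, ‖y‖ ^ p * ‖x - y‖ ^ q ≤ (‖x‖ / 2) ^ q * ‖y‖ ^ p := fun y hy ↦ by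
    rw [mul_comm]
    exact mul_le_mul_of_nonneg_right
      (rpow_le_rpow_of_nonpos (by positivity) (norm_sub_rev x y ▸ hy.1) hq) (by positivity)
  calc ∫ y in S, ‖y‖ ^ p * ‖x - y‖ ^ q ∂μ
      ≤ ∫ y in S, (‖x‖ / 2) ^ q * ‖y‖ ^ p ∂μ :=
        integral_mono_of_nonneg (.of_forall fun y ↦ by positivity)
          ((hball.mono_set hSball).const_mul _) (ae_restrict_of_forall_mem hS hbound)
    _ = (‖x‖ / 2) ^ q * ∫ y in S, ‖y‖ ^ p ∂μ := integral_const_mul _ _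
    _ ≤ (‖x‖ / 2) ^ q * ∫ y in closedBall 0 ‖x‖, ‖y‖ ^ p ∂μ :=
        mul_le_mul_of_nonneg_left
          (setIntegral_mono_set hball (.of_forall fun y ↦ by positivity) hSball.eventuallyLE)
          (by positivity)
    _ = _ := by
        rw [integral_closedBall_norm_rpow μ hp hxpos.le, div_rpow hxpos.le zero_le_two,
          rpow_neg zero_le_two, rpow_add hxpos (p + q), rpow_add hxpos p,
          rpow_add hxpos p q]
        ring

end RadialPower

theorem I2_estimate_general (n : ℕ) (hn : 1 ≤ n) (m σ : ℝ)
    (hm : 0 < m) (hσ : 0 < σ) :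
    ∃ C > (0 : ℝ), ∀ x : EuclideanSpace ℝ (Fin n), x ≠ 0 →
      (∫ y in {y : EuclideanSpace ℝ (Fin n) | ‖x‖ / 2 ≤ ‖y - x‖ ∧ ‖y‖ ≤ ‖x‖},
          ‖y‖ ^ (2 * m - n) * ‖x - y‖ ^ (-((n : ℝ) + 2 * σ)))
        ≤ C * ‖x‖ ^ (2 * m - 2 * σ - n) := by
  have : Nonempty (Fin n) := ⟨⟨0, hn⟩⟩
  have hdim := finrank_euclideanSpace_fin (𝕜 := ℝ) (n := n)
  have hp : -(Module.finrank ℝ (EuclideanSpace ℝ (Fin n)) : ℝ) < 2 * m - n := by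
    rw [hdim]; linarith
  have hvol : 0 < volume.real (ball (0 : EuclideanSpace ℝ (Fin n)) 1) :=
    ENNReal.toReal_pos (measure_ball_pos _ _ one_pos).ne' measure_ball_lt_top.ne
  refine ⟨2 ^ ((n : ℝ) + 2 * σ) *
      (n * volume.real (ball (0 : EuclideanSpace ℝ (Fin n)) 1) / (2 * m)), by positivity,
    fun x hx ↦ ?_⟩
  convert setIntegral_norm_rpow_mul_norm_sub_rpow_le volume hx hp
    (q := -((n : ℝ) + 2 * σ)) (by linarith) using 2
  all_goals rw [hdim]; ring_nf

/-- Estimate `I₂` from the proof of Lemma 3.1(a): for `0 < m < n/2` and `σ > 0`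
there is `C > 0` such that for every `x ≠ 0`,
`∫_{|y-x| ≥ |x|/2, |y| ≤ |x|} |y|^{2m-n} |x-y|^{-(n+2σ)} dy ≤ C |x|^{2m-2σ-n}`. -/
theorem I2_estimate (n : ℕ) (hn : 1 ≤ n) (m σ : ℝ)
    (hm : 0 < m) (hmn : m < n / 2) (hσ : 0 < σ) :
    ∃ C > (0 : ℝ), ∀ x : EuclideanSpace ℝ (Fin n), x ≠ 0 →
      (∫ y in {y : EuclideanSpace ℝ (Fin n) | ‖x‖ / 2 ≤ ‖y - x‖ ∧ ‖y‖ ≤ ‖x‖},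
          ‖y‖ ^ (2 * m - n) * ‖x - y‖ ^ (-((n : ℝ) + 2 * σ)))
        ≤ C * ‖x‖ ^ (2 * m - 2 * σ - n) :=
  I2_estimate_general n hn m σ hm hσ
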